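/- Let p be a prime, let G be a finite group, let N = O_p(G) be the largest normal p-subgroup of G, and let P be a Sylow p-subgroup of G. If |P : N| ≤ p^b and p^{a+1} does not divide |C| for every conjugacy class C of G, then every conjugacy class of P has size at most p^{a+b}; in particular b*(P) ≤ p^{a+b}. -/

import Mathlib

open CategoryTheory

/-!
For `x ∈ P` we have `N ≤ P` and `|P : C_P(x)| ≤ |P : N| · |N : C_N(x)|`, with `|P : N| ≤ p ^ b`.
Since `N` is normal, `|N : C_N(x)| = |C_G(x) N : C_G(x)|` divides `|G : C_G(x)|`; as it also divides
the `p`-power `|N|`, it is at most the `p`-part of that class size, hence at most `p ^ a`.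
-/

namespace Subgroup

variable {G : Type*} [Group G]

theorem nat_card_isConj_eq_index_centralizer (x : G) :
    Nat.card {y : G // IsConj x y} = (centralizer {x}).index := by
  have : (centralizer {x}).index = (MulAction.stabilizer (ConjAct G) x).index := by
    rw [centralizer_eq_comap_stabilizer]
    exact index_comap_of_surjective _ ConjAct.toConjAct.surjective
  rw [this, MulAction.index_stabilizer, ← Nat.card_coe_set_eq]
  exact Nat.card_congr <| Equiv.subtypeEquivRight fun y =>
    isConj_comm.trans ConjAct.mem_orbit_conjAct.symm

theorem subgroupOf_centralizer_singleton (H : Subgroup G) (x : H) :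
    (centralizer {(x : G)}).subgroupOf H = centralizer {x} := by
  ext y
  simp only [mem_subgroupOf, mem_centralizer_singleton_iff, Subtype.ext_iff, coe_mul]

theorem index_dvd_relIndex_mul_index (H K : Subgroup G) : H.index ∣ H.relIndex K * K.index := by
  rw [← inf_relIndex_right, relIndex_mul_index inf_le_right]
  exact index_dvd_of_le inf_le_left

theorem relIndex_mul_index_sup [Finite G] (H K : Subgroup G) [K.Normal] :
    H.relIndex K * (H ⊔ K).index = H.index := by
  have hK : K.relIndex H ≠ 0 := index_ne_zero_of_finite
  have hH : K.relIndex H * H.index = H.relIndex K * K.index := by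
    rw [← inf_relIndex_left, relIndex_mul_index inf_le_left, ← relIndex_mul_index inf_le_right,
      inf_relIndex_right]
  have hsup : K.relIndex H * (H ⊔ K).index = K.index := by
    rw [← relIndex_sup_right H K, relIndex_mul_index le_sup_right]
  apply Nat.eq_of_mul_eq_mul_left (Nat.pos_of_ne_zero hK)
  rw [hH, ← hsup]
  ring

theorem relIndex_dvd_index_of_normal_right [Finite G] (H K : Subgroup G) [K.Normal] :
    H.relIndex K ∣ H.index :=
  Dvd.intro _ (relIndex_mul_index_sup H K)

end Subgroup

theorem Nat.le_pow_of_dvd_prime_pow_of_not_dvd {p k a d n : ℕ} (hp : p.Prime)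
    (hdp : d ∣ p ^ k) (hdn : d ∣ n) (hn : ¬ p ^ (a + 1) ∣ n) : d ≤ p ^ a := by
  obtain ⟨m, -, rfl⟩ := (Nat.dvd_prime_pow hp).mp hdp
  refine Nat.pow_le_pow_right hp.pos (not_lt.mp fun ham => hn ?_)
  exact (pow_dvd_pow p ham).trans hdn

theorem IsPGroup.relIndex_le_of_not_dvd_index {G : Type*} [Group G] [Finite G] {p : ℕ}
    [Fact p.Prime] {N : Subgroup G} [N.Normal] (hN : IsPGroup p N) {H : Subgroup G} {a : ℕ}
    (hH : ¬ p ^ (a + 1) ∣ H.index) : H.relIndex N ≤ p ^ a := by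
  obtain ⟨k, hk⟩ := IsPGroup.iff_card.mp hN
  exact Nat.le_pow_of_dvd_prime_pow_of_not_dvd Fact.out (hk ▸ Subgroup.index_dvd_card _)
    (H.relIndex_dvd_index_of_normal_right N) hH

theorem sylow_class_size_of_Op_index_general (p : ℕ) [Fact p.Prime]
    (G : Type*) [Group G] [Finite G]
    (N : Subgroup G) (hNnormal : N.Normal) (hNp : IsPGroup p ↥N)
    (P : Sylow p G) (a b : ℕ)
    (hindex : (N.subgroupOf (P : Subgroup G)).index ≤ p ^ b)
    (ha : ∀ x : G, ¬ p ^ (a + 1) ∣ Nat.card {y : G // IsConj x y}) :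
    ∀ x : ↥(P : Subgroup G),
      Nat.card {y : ↥(P : Subgroup G) // IsConj x y} ≤ p ^ (a + b) := by
  intro x
  have hNP : N ≤ P := hNp.le_sylow_of_normal P
  have hN : (Subgroup.centralizer {(x : G)}).relIndex N ≤ p ^ a := by
    refine hNp.relIndex_le_of_not_dvd_index ?_
    simpa only [Subgroup.nat_card_isConj_eq_index_centralizer] using ha x
  rw [Subgroup.nat_card_isConj_eq_index_centralizer, ← Subgroup.subgroupOf_centralizer_singleton]
  calc ((Subgroup.centralizer {(x : G)}).subgroupOf P).index
      ≤ ((Subgroup.centralizer {(x : G)}).subgroupOf P).relIndex (N.subgroupOf P)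
          * (N.subgroupOf P).index :=
        Nat.le_of_dvd (Nat.pos_of_ne_zero <| mul_ne_zero Subgroup.index_ne_zero_of_finite
          Subgroup.index_ne_zero_of_finite) (Subgroup.index_dvd_relIndex_mul_index _ _)
    _ = (Subgroup.centralizer {(x : G)}).relIndex N * (N.subgroupOf P).index := by
        rw [Subgroup.relIndex_subgroupOf hNP]
    _ ≤ p ^ a * p ^ b := Nat.mul_le_mul hN hindex
    _ = p ^ (a + b) := (pow_add p a b).symm

theorem sylow_class_size_of_Op_index (p : ℕ) [Fact p.Prime]
    (G : Type*) [Group G] [Finite G]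
    (N : Subgroup G) (hNnormal : N.Normal) (hNp : IsPGroup p ↥N)
    (hNmax : ∀ M : Subgroup G, M.Normal → IsPGroup p ↥M → M ≤ N)
    (P : Sylow p G) (a b : ℕ)
    (hindex : (N.subgroupOf (P : Subgroup G)).index ≤ p ^ b)
    (ha : ∀ x : G, ¬ p ^ (a + 1) ∣ Nat.card {y : G // IsConj x y}) :
    ∀ x : ↥(P : Subgroup G),
      Nat.card {y : ↥(P : Subgroup G) // IsConj x y} ≤ p ^ (a + b) :=
  sylow_class_size_of_Op_index_general p G N hNnormal hNp P a b hindex ha
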